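/- Let 𝒬 be a finite nonempty set of positive integers, δ > 0 a real number, L = Σ_{q∈𝒬} φ(q), and let Ĩ_{𝒬,δ} be the Jutila approximant. Then ∫₀¹ Ĩ_{𝒬,δ}(x) dx = 1, and for every nonzero integer h, ∫₀¹ Ĩ_{𝒬,δ}(x) e^{−2πihx} dx = (1/L) Σ_{q∈𝒬} c_q(h) · sin(2πhδ)/(2πhδ), where c_q(h) = Σ_{1≤a≤q, gcd(a,q)=1} e^{−2πiah/q} is the Ramanujan sum. -/

import Mathlib

open MeasureTheory

/-- Jutila's approximant `Ĩ_{𝒬,δ}` to the indicator of `[0,1]`: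
`Ĩ_{𝒬,δ}(x) = (1/(2δL)) ∑_{q ∈ 𝒬} ∑_{a ∈ ℤ, gcd(a,q)=1} 𝟙_{[a/q-δ, a/q+δ]}(x)`,
where `L = ∑_{q ∈ 𝒬} φ(q)`. -/
noncomputable def jutilaApprox (𝒬 : Finset ℕ) (δ : ℝ) (x : ℝ) : ℝ :=
  (2 * δ * ∑ q ∈ 𝒬, (Nat.totient q : ℝ))⁻¹ *
    ∑ q ∈ 𝒬, ∑' a : ℤ,
      if Int.gcd a q = 1 then
        Set.indicator (Set.Icc ((a : ℝ) / q - δ) ((a : ℝ) / q + δ)) (fun _ => (1 : ℝ)) x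
      else 0

/-- The Ramanujan sum `c_q(h) = ∑_{1 ≤ a ≤ q, gcd(a,q)=1} e^{-2πiah/q}`. -/
noncomputable def ramanujanSum (q : ℕ) (h : ℤ) : ℂ :=
  ∑ a ∈ Finset.Icc 1 q,
    if Nat.gcd a q = 1 then Complex.exp (-(2 * Real.pi * Complex.I * a * h / q)) else 0

/-!
The inner sum over `a` is `1`-periodic in `x`, and so is `e(-hx)`. Writing `a = kq + r` with
`1 ≤ r ≤ q`, the arcs around `a/q` are the integer translates of the arc around `r/q`, so the
integral over `[0, 1]` of their sum against `e(-hx)` unfolds to the integral over `ℝ` of a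
single arc, namely `2δ · sinc(2πhδ) · e(-hr/q)`. Summing over `r` coprime to `q` produces the
Ramanujan sum `c_q(h)`, and for `h = 0` we get `c_q(0) = φ(q)`, which the normalisation by `2δL`
turns into `1`. On `[0, 1]` only finitely many `a` contribute, which justifies exchanging sum
and integral.
-/

open Set Complex
open scoped Real

section FiniteTsum

variable {ι E : Type*} [NormedAddCommGroup E] {f : ι → ℝ → E} {a b : ℝ}

lemma eqOn_tsum_finsetSum (hfin : {i | ∃ x ∈ uIcc a b, f i x ≠ 0}.Finite) :
    EqOn (fun x => ∑' i, f i x) (fun x => ∑ i ∈ hfin.toFinset, f i x) (uIcc a b) := by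
  intro x hx
  refine tsum_eq_sum fun i hi => ?_
  by_contra hne
  exact hi (hfin.mem_toFinset.mpr ⟨x, hx, hne⟩)

lemma intervalIntegrable_tsum_of_finite (hfin : {i | ∃ x ∈ uIcc a b, f i x ≠ 0}.Finite)
    (hf : ∀ i, IntervalIntegrable (f i) volume a b) :
    IntervalIntegrable (fun x => ∑' i, f i x) volume a b :=
  (IntervalIntegrable.sum hfin.toFinset fun i _ => hf i).congr fun x hx => by
    simpa only [Finset.sum_apply] using (eqOn_tsum_finsetSum hfin (uIoc_subset_uIcc hx)).symm

variable [NormedSpace ℝ E]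

lemma hasSum_intervalIntegral_of_finite (hfin : {i | ∃ x ∈ uIcc a b, f i x ≠ 0}.Finite)
    (hf : ∀ i, IntervalIntegrable (f i) volume a b) :
    HasSum (fun i => ∫ x in a..b, f i x) (∫ x in a..b, ∑' i, f i x) := by
  rw [intervalIntegral.integral_congr (eqOn_tsum_finsetSum hfin),
    intervalIntegral.integral_finsetSum fun i _ => hf i]
  refine hasSum_sum_of_ne_finset_zero fun i hi => ?_
  rw [intervalIntegral.integral_congr (g := fun _ => 0) fun x hx => ?_,
    intervalIntegral.integral_zero]
  by_contra hne
  exact hi (hfin.mem_toFinset.mpr ⟨x, hx, hne⟩)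

end FiniteTsum

lemma tsum_int_eq_sum_Icc_tsum {E : Type*} [NormedAddCommGroup E] [CompleteSpace E] {f : ℤ → E}
    (hf : Summable f) {q : ℕ} (hq : 0 < q) :
    ∑' a, f a = ∑ r ∈ Finset.Icc 1 q, ∑' k : ℤ, f (k * q + r) := by
  have : NeZero q := ⟨hq.ne'⟩
  let e : Fin q × ℤ ≃ ℤ :=
    ((Equiv.prodComm _ _).trans (Int.divModEquiv q).symm).trans (Equiv.addRight 1)
  have hfe : Summable (f ∘ e) := e.summable_iff.mpr hf
  have he : ∀ r k, e (r, k) = k * q + (r : ℕ) + 1 := fun _ _ => rfl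
  rw [← e.tsum_eq, ← Function.comp_def f e, hfe.tsum_prod' hfe.prod_factor, tsum_fintype]
  simp only [Function.comp_apply, he]
  have hshift := Finset.sum_Ico_add' (fun r : ℕ => ∑' k : ℤ, f (k * q + r)) 0 q 1
  push_cast [zero_add, Finset.Ico_add_one_right_eq_Icc, ← add_assoc] at hshift
  rw [Fin.sum_univ_eq_sum_range (fun r => ∑' k : ℤ, f (k * q + r + 1)), Finset.range_eq_Ico,
    hshift]

lemma finite_setOf_exists_mem_Icc_div {q : ℕ} (hq : 0 < q) (δ l u : ℝ) :
    {a : ℤ | ∃ x ∈ Icc l u, x ∈ Icc ((a : ℝ) / q - δ) ((a : ℝ) / q + δ)}.Finite := by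
  refine ((Int.isClosedEmbedding_coe_real.isCompact_preimage
    (isCompact_Icc (a := q * (l - δ)) (b := q * (u + δ)))).finite_of_discrete).subset ?_
  rintro a ⟨x, ⟨hlx, hxu⟩, hax, hxa⟩
  have hq' : (0 : ℝ) < q := by exact_mod_cast hq
  constructor
  · rw [← le_div_iff₀' hq']; linarith
  · rw [← div_le_iff₀' hq']; linarith

lemma periodic_exp_neg_two_pi_I_int_mul (h : ℤ) :
    Function.Periodic (fun x : ℝ => exp (-(2 * π * I * h * x))) 1 := fun x => by
  simp only [ofReal_add, ofReal_one, mul_add, mul_one, neg_add, exp_add]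
  rw [show -(2 * π * I * h) = ((-h : ℤ) : ℂ) * (2 * π * I) by push_cast; ring,
    exp_int_mul_two_pi_mul_I, mul_one]

lemma integral_exp_neg_two_pi_I_int_mul (h : ℤ) (c δ : ℝ) :
    ∫ x in (c - δ)..(c + δ), exp (-(2 * π * I * h * x)) =
      2 * δ * Real.sinc (2 * π * h * δ) * exp (-(2 * π * I * h * c)) := by
  rcases eq_or_ne h 0 with rfl | hh
  · simp only [Int.cast_zero, mul_zero, zero_mul, neg_zero, exp_zero, mul_one, Real.sinc_zero,
      ofReal_one, intervalIntegral.integral_const, add_sub_sub_cancel, real_smul, ofReal_add]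
    ring
  rcases eq_or_ne δ 0 with rfl | hδ
  · simp
  have hθ : 2 * π * h * δ ≠ 0 := by have := Real.pi_ne_zero; positivity
  have hμ : -(2 * π * I * h) ≠ 0 := by simp [hh, Real.pi_ne_zero, I_ne_zero]
  simp_rw [show ∀ x : ℝ, -(2 * π * I * h * x) = -(2 * π * I * h) * x by intro; ring]
  rw [integral_exp_mul_complex hμ, Real.sinc_of_ne_zero hθ]
  have hsin : exp (-(2 * π * h * δ) * I) - exp ((2 * π * h * δ) * I) =
      -2 * I * Complex.sin (2 * π * h * δ) := by
    rw [Complex.sin]; ring_nf; rw [I_sq]; ring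
  have hc (s : ℝ) : exp (-(2 * π * I * h) * ↑(c + s)) =
      exp (-(2 * π * I * h * c)) * exp (-(2 * π * h * s) * I) := by
    rw [← exp_add]; push_cast; ring_nf
  rw [sub_eq_add_neg c δ, hc, hc]
  push_cast
  rw [← mul_sub, mul_neg, neg_neg, hsin, neg_mul_comm]
  have hδ' : (δ : ℂ) ≠ 0 := ofReal_ne_zero.mpr hδ
  field_simp

lemma hasSum_intervalIntegral_indicator_exp (h : ℤ) (c : ℝ) {δ : ℝ} (hδ : 0 ≤ δ) :
    HasSum (fun k : ℤ => ∫ x in (0 : ℝ)..1,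
        (Icc (c + k - δ) (c + k + δ)).indicator (fun x => exp (-(2 * π * I * h * x))) x)
      (2 * δ * Real.sinc (2 * π * h * δ) * exp (-(2 * π * I * h * c))) := by
  set e : ℝ → ℂ := fun x => exp (-(2 * π * I * h * x))
  set F := (Icc (c - δ) (c + δ)).indicator e
  have hF : Integrable F :=
    (integrable_indicator_iff measurableSet_Icc).mpr (by fun_prop : Continuous e).integrableOn_Icc
  have hFe : ∫ x, F x = 2 * δ * Real.sinc (2 * π * h * δ) * exp (-(2 * π * I * h * c)) := by
    rw [integral_indicator measurableSet_Icc, integral_Icc_eq_integral_Ioc,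
      ← intervalIntegral.integral_of_le (by linarith), integral_exp_neg_two_pi_I_int_mul]
  have htranslate (k : ℤ) :
      (Icc (c + k - δ) (c + k + δ)).indicator e = fun x => F (x + (-k : ℤ)) := by
    have hper : e ∘ (· - (k : ℝ)) = e := funext fun x => by
      simpa [e] using (periodic_exp_neg_two_pi_I_int_mul h).sub_int_mul_eq k (x := x)
    ext x
    change _ = (Icc (c - δ) (c + δ)).indicator e (x + ((-k : ℤ) : ℝ))
    rw [Int.cast_neg, ← sub_eq_add_neg, ← Set.indicator_comp_right (· - (k : ℝ)),
      Set.preimage_sub_const_Icc, hper, sub_add_eq_add_sub, add_right_comm]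
  rw [← hFe]
  simp_rw [htranslate]
  exact (Equiv.neg ℤ).hasSum_iff.mpr hF.hasSum_intervalIntegral_comp_add_int

noncomputable def coprimeArcCount (q : ℕ) (δ x : ℝ) : ℝ :=
  ∑' a : ℤ, if Int.gcd a q = 1 then
    (Icc ((a : ℝ) / q - δ) ((a : ℝ) / q + δ)).indicator (fun _ => (1 : ℝ)) x else 0

lemma ofReal_coprimeArcCount_mul (q : ℕ) (δ x : ℝ) (g : ℝ → ℂ) :
    (coprimeArcCount q δ x : ℂ) * g x = ∑' a : ℤ, if Int.gcd a q = 1 then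
      (Icc ((a : ℝ) / q - δ) ((a : ℝ) / q + δ)).indicator g x else 0 := by
  rw [coprimeArcCount, ofReal_tsum, ← tsum_mul_right]
  congr 1 with a
  split_ifs
  · by_cases hx : x ∈ Icc ((a : ℝ) / q - δ) ((a : ℝ) / q + δ) <;> simp [hx]
  · simp

lemma finite_setOf_coprimeArc_ne_zero {q : ℕ} (hq : 0 < q) (δ : ℝ) (g : ℝ → ℂ) :
    {a : ℤ | ∃ x ∈ uIcc (0 : ℝ) 1, (if Int.gcd a q = 1 then
      (Icc ((a : ℝ) / q - δ) ((a : ℝ) / q + δ)).indicator g x else 0) ≠ 0}.Finite := by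
  refine (finite_setOf_exists_mem_Icc_div hq δ 0 1).subset
    fun a ⟨x, hx, hne⟩ => ⟨x, ?_, ?_⟩
  · rwa [uIcc_of_le zero_le_one] at hx
  · by_contra hmem
    simp [hmem] at hne

section CoprimeArcs

variable {q : ℕ} {δ : ℝ} {g : ℝ → ℂ}

lemma intervalIntegrable_coprimeArc (hg : Continuous g) (a : ℤ) :
    IntervalIntegrable (fun x => if Int.gcd a q = 1 then
      (Icc ((a : ℝ) / q - δ) ((a : ℝ) / q + δ)).indicator g x else 0) volume 0 1 := by
  split_ifs
  · exact (hg.integrableOn_Icc.integrable_indicator measurableSet_Icc).intervalIntegrable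
  · exact intervalIntegrable_const

lemma intervalIntegrable_coprimeArcCount_mul (hq : 0 < q) (hg : Continuous g) :
    IntervalIntegrable (fun x => (coprimeArcCount q δ x : ℂ) * g x) volume 0 1 := by
  simp_rw [ofReal_coprimeArcCount_mul]
  exact intervalIntegrable_tsum_of_finite (finite_setOf_coprimeArc_ne_zero hq δ g)
    (intervalIntegrable_coprimeArc hg)

theorem integral_coprimeArcCount_mul_exp (hq : 0 < q) (hδ : 0 ≤ δ) (h : ℤ) :
    ∫ x in (0 : ℝ)..1, (coprimeArcCount q δ x : ℂ) * exp (-(2 * π * I * h * x)) =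
      2 * δ * Real.sinc (2 * π * h * δ) * ramanujanSum q h := by
  set e : ℝ → ℂ := fun x => exp (-(2 * π * I * h * x))
  have hsum := hasSum_intervalIntegral_of_finite (finite_setOf_coprimeArc_ne_zero hq δ e)
    (intervalIntegrable_coprimeArc (by fun_prop))
  rw [intervalIntegral.integral_congr fun x _ => ofReal_coprimeArcCount_mul q δ x e,
    ← hsum.tsum_eq, tsum_int_eq_sum_Icc_tsum hsum.summable hq, ramanujanSum, Finset.mul_sum]
  refine Finset.sum_congr rfl fun r _ => ?_
  have hgcd (k : ℤ) : Int.gcd (k * q + r) q = Nat.gcd r q := by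
    rw [add_comm, Int.gcd_add_mul_right_left]; rfl
  have hq' : (q : ℝ) ≠ 0 := by positivity
  have hcenter (k : ℤ) : ((k * q + r : ℤ) : ℝ) / q = r / q + k := by
    push_cast; field_simp; ring
  simp only [hgcd, hcenter]
  split_ifs
  · rw [(hasSum_intervalIntegral_indicator_exp h _ hδ).tsum_eq]
    congr 2
    push_cast
    ring
  · simp

end CoprimeArcs

lemma ramanujanSum_zero (q : ℕ) : ramanujanSum q 0 = Nat.totient q := by
  simp only [ramanujanSum, Int.cast_zero, mul_zero, zero_div, neg_zero, exp_zero,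
    Finset.sum_boole]
  rw [← Nat.filter_coprime_Ico_eq_totient q 1, add_comm, Finset.Ico_add_one_right_eq_Icc]
  simp [Nat.coprime_comm, Nat.Coprime]

lemma jutilaApprox_eq_sum_coprimeArcCount (𝒬 : Finset ℕ) (δ x : ℝ) :
    jutilaApprox 𝒬 δ x =
      (2 * δ * ∑ q ∈ 𝒬, (Nat.totient q : ℝ))⁻¹ * ∑ q ∈ 𝒬, coprimeArcCount q δ x :=
  rfl

theorem integral_jutilaApprox_mul_exp {𝒬 : Finset ℕ} (h𝒬pos : ∀ q ∈ 𝒬, 0 < q) {δ : ℝ}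
    (hδ : 0 < δ) (h : ℤ) :
    ∫ x in (0 : ℝ)..1, (jutilaApprox 𝒬 δ x : ℂ) * exp (-(2 * π * I * h * x)) =
      (∑ q ∈ 𝒬, (Nat.totient q : ℂ))⁻¹ *
        ∑ q ∈ 𝒬, ramanujanSum q h * Real.sinc (2 * π * h * δ) := by
  have hsplit (x : ℝ) : (jutilaApprox 𝒬 δ x : ℂ) * exp (-(2 * π * I * h * x)) =
      (2 * δ * ∑ q ∈ 𝒬, (Nat.totient q : ℂ))⁻¹ *
        ∑ q ∈ 𝒬, (coprimeArcCount q δ x : ℂ) * exp (-(2 * π * I * h * x)) := by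
    rw [jutilaApprox_eq_sum_coprimeArcCount, ← Finset.sum_mul]
    push_cast
    ring
  simp_rw [hsplit]
  rw [intervalIntegral.integral_const_mul,
    intervalIntegral.integral_finsetSum fun q hq =>
      intervalIntegrable_coprimeArcCount_mul (h𝒬pos q hq) (by fun_prop),
    Finset.sum_congr rfl fun q hq =>
      integral_coprimeArcCount_mul_exp (h𝒬pos q hq) hδ.le h,
    ← Finset.mul_sum, ← Finset.sum_mul]
  have hδ' : (δ : ℂ) ≠ 0 := ofReal_ne_zero.mpr hδ.ne'
  field_simp

theorem jutila_fourier_coefficients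
    (𝒬 : Finset ℕ) (h𝒬 : 𝒬.Nonempty) (h𝒬pos : ∀ q ∈ 𝒬, 0 < q)
    (δ : ℝ) (hδ : 0 < δ) :
    (∫ x in (0:ℝ)..1, jutilaApprox 𝒬 δ x) = 1 ∧
    ∀ h : ℤ, h ≠ 0 →
      (∫ x in (0:ℝ)..1,
          (jutilaApprox 𝒬 δ x : ℂ) * Complex.exp (-(2 * Real.pi * Complex.I * h * x))) =
        (∑ q ∈ 𝒬, (Nat.totient q : ℂ))⁻¹ *
          ∑ q ∈ 𝒬, ramanujanSum q h *
            ((Real.sin (2 * Real.pi * h * δ) / (2 * Real.pi * h * δ) : ℝ) : ℂ) := by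
  refine ⟨?_, fun h hh => ?_⟩
  · have hL : (∑ q ∈ 𝒬, (Nat.totient q : ℂ)) ≠ 0 := by
      exact_mod_cast (Finset.sum_pos (fun q hq => Nat.totient_pos.mpr (h𝒬pos q hq)) h𝒬).ne'
    have h0 := integral_jutilaApprox_mul_exp h𝒬pos hδ 0
    simp only [Int.cast_zero, mul_zero, zero_mul, neg_zero, exp_zero, mul_one, Real.sinc_zero,
      ofReal_one, ramanujanSum_zero, inv_mul_cancel₀ hL, intervalIntegral.integral_ofReal] at h0
    exact_mod_cast h0
  · rw [integral_jutilaApprox_mul_exp h𝒬pos hδ h,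
      Real.sinc_of_ne_zero (by have := Real.pi_ne_zero; positivity)]
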